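/- arXiv:1309.0791 — 2 statements merged into one kernel-verified Lean document; each statement's English description precedes it below -/
import Mathlib

section
/- Let a, b, a', b' ∈ ℂ satisfy a² + 3b² = a'² + 3b'² and (b − b')(b + b')(2b − a' − b')(2b − a' + b')(2b + a' − b')(2b + a' + b') = 0. Then (a', b') lies in the orbit of (a, b) under the group of order 12 generated by the transformations s: (a,b) ↦ ((a+3b)/2, (a−b)/2) and t: (a,b) ↦ (a, −b). -/
/-!
Both `s` and `t` preserve `a² + 3b²`, hence so does every element of `⟨s, t⟩`. The six factors
of the second relation say that `b` is the second coordinate of `g (a', b')` for one of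
`g = 1, t, st, s, ts, tst`. A point with second coordinate `b` and the same value of `a² + 3b²`
as `(a, b)` is `(±a, b)`, and `(-a, b) = -t (a, b)`, where `-1 = (st)³` lies in the group.
-/

noncomputable section

/-- The linear map `s : (a,b) ↦ ((a+3b)/2, (a−b)/2)` on `ℂ²`. -/
def sMap : (ℂ × ℂ) →ₗ[ℂ] (ℂ × ℂ) where
  toFun p := ((p.1 + 3 * p.2) / 2, (p.1 - p.2) / 2)
  map_add' p q := by
    simp only [Prod.fst_add, Prod.snd_add, Prod.mk_add_mk, Prod.mk.injEq]
    constructor <;> ring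
  map_smul' c p := by
    simp only [Prod.smul_fst, Prod.smul_snd, smul_eq_mul, Prod.smul_mk, RingHom.id_apply,
      Prod.mk.injEq]
    constructor <;> ring

lemma sMap_involutive : Function.Involutive sMap := by
  intro p
  simp only [sMap, LinearMap.coe_mk, AddHom.coe_mk]
  rw [Prod.ext_iff]
  constructor <;> · simp; ring

/-- The linear map `t : (a,b) ↦ (a, −b)` on `ℂ²`. -/
def tMap : (ℂ × ℂ) →ₗ[ℂ] (ℂ × ℂ) where
  toFun p := (p.1, -p.2)
  map_add' p q := by
    simp only [Prod.fst_add, Prod.snd_add, Prod.mk_add_mk, Prod.mk.injEq]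
    try constructor
    all_goals (try ring_nf)
    all_goals (try simp)
  map_smul' c p := by
    simp only [Prod.smul_fst, Prod.smul_snd, smul_eq_mul, Prod.smul_mk, RingHom.id_apply,
      Prod.mk.injEq]
    try constructor
    all_goals (try ring_nf)
    all_goals (try simp)

lemma tMap_involutive : Function.Involutive tMap := by
  intro p
  simp [tMap]

/-- `s` as a linear automorphism of `ℂ²`. -/
def sEquiv : (ℂ × ℂ) ≃ₗ[ℂ] (ℂ × ℂ) := LinearEquiv.ofInvolutive sMap sMap_involutive

/-- `t` as a linear automorphism of `ℂ²`. -/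
def tEquiv : (ℂ × ℂ) ≃ₗ[ℂ] (ℂ × ℂ) := LinearEquiv.ofInvolutive tMap tMap_involutive

abbrev dihedralSubgroup : Subgroup ((ℂ × ℂ) ≃ₗ[ℂ] (ℂ × ℂ)) :=
  Subgroup.closure {sEquiv, tEquiv}

def quadForm (p : ℂ × ℂ) : ℂ := p.1 ^ 2 + 3 * p.2 ^ 2

lemma sEquiv_apply (p : ℂ × ℂ) : sEquiv p = ((p.1 + 3 * p.2) / 2, (p.1 - p.2) / 2) := rfl

lemma tEquiv_apply (p : ℂ × ℂ) : tEquiv p = (p.1, -p.2) := rfl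

lemma sEquiv_mem : sEquiv ∈ dihedralSubgroup := Subgroup.subset_closure (by simp)

lemma tEquiv_mem : tEquiv ∈ dihedralSubgroup := Subgroup.subset_closure (by simp)

lemma quadForm_sEquiv (p : ℂ × ℂ) : quadForm (sEquiv p) = quadForm p := by
  simp only [quadForm, sEquiv_apply]
  ring

lemma quadForm_tEquiv (p : ℂ × ℂ) : quadForm (tEquiv p) = quadForm p := by
  simp only [quadForm, tEquiv_apply, neg_sq]

lemma quadForm_apply_of_mem {g : (ℂ × ℂ) ≃ₗ[ℂ] (ℂ × ℂ)} (hg : g ∈ dihedralSubgroup)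
    (p : ℂ × ℂ) : quadForm (g p) = quadForm p := by
  induction hg using Subgroup.closure_induction generalizing p with
  | mem g hg =>
    rcases hg with rfl | rfl
    exacts [quadForm_sEquiv p, quadForm_tEquiv p]
  | one => rfl
  | mul g h _ _ hg hh => rw [LinearEquiv.mul_apply, hg, hh]
  | inv g _ hg => rw [← hg, LinearEquiv.coe_inv, LinearEquiv.apply_symm_apply]

lemma neg_mem_dihedralSubgroup : LinearEquiv.neg ℂ ∈ dihedralSubgroup := by
  have h : LinearEquiv.neg ℂ = (sEquiv * tEquiv) ^ 3 := by
    ext p <;>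
      simp only [LinearEquiv.coe_neg, Pi.neg_apply, id_eq, Prod.fst_neg, Prod.snd_neg, pow_succ,
        pow_zero, one_mul, LinearEquiv.mul_apply, tEquiv_apply, sEquiv_apply] <;> ring
  rw [h]
  exact pow_mem (mul_mem sEquiv_mem tEquiv_mem) 3

lemma exists_mem_apply_eq_of_snd_eq {p q : ℂ × ℂ} (hsnd : p.2 = q.2)
    (hQ : quadForm p = quadForm q) : ∃ g ∈ dihedralSubgroup, g q = p := by
  have hfst : (p.1 - q.1) * (p.1 + q.1) = 0 := by
    unfold quadForm at hQ
    rw [hsnd] at hQ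
    linear_combination hQ
  rcases mul_eq_zero.mp hfst with h | h
  · exact ⟨1, one_mem _, (Prod.ext (by linear_combination h) hsnd).symm⟩
  · refine ⟨LinearEquiv.neg ℂ * tEquiv, mul_mem neg_mem_dihedralSubgroup tEquiv_mem, ?_⟩
    exact Prod.ext (show -q.1 = p.1 by linear_combination -h)
      (show - -q.2 = p.2 by rw [neg_neg, hsnd])

lemma exists_mem_snd_apply_eq {b a' b' : ℂ}
    (h : (b - b') * (b + b') * (2 * b - a' - b') * (2 * b - a' + b') *
      (2 * b + a' - b') * (2 * b + a' + b') = 0) :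
    ∃ g ∈ dihedralSubgroup, (g (a', b')).2 = b := by
  have hs := sEquiv_mem
  have ht := tEquiv_mem
  simp only [mul_eq_zero] at h
  rcases h with ((((h | h) | h) | h) | h) | h
  · exact ⟨1, one_mem _, show b' = b by linear_combination -h⟩
  · exact ⟨tEquiv, ht, show -b' = b by linear_combination -h⟩
  · exact ⟨sEquiv * tEquiv, mul_mem hs ht, show (a' - -b') / 2 = b by linear_combination -h / 2⟩
  · exact ⟨sEquiv, hs, show (a' - b') / 2 = b by linear_combination -h / 2⟩
  · exact ⟨tEquiv * sEquiv, mul_mem ht hs, show -((a' - b') / 2) = b by linear_combination -h / 2⟩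
  · exact ⟨tEquiv * sEquiv * tEquiv, mul_mem (mul_mem ht hs) ht,
      show -((a' - -b') / 2) = b by linear_combination -h / 2⟩

/-- the relations forcing equal invariants for family 6 imply that
`(a', b')` is in the orbit of `(a, b)` under the group (of order 12) generated by
`s : (a,b) ↦ ((a+3b)/2, (a−b)/2)` and `t : (a,b) ↦ (a, −b)`. -/
theorem stmt_6 (a b a' b' : ℂ)
    (h1 : a ^ 2 + 3 * b ^ 2 = a' ^ 2 + 3 * b' ^ 2)
    (h2 : (b - b') * (b + b') * (2 * b - a' - b') * (2 * b - a' + b') *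
      (2 * b + a' - b') * (2 * b + a' + b') = 0) :
    ∃ g ∈ Subgroup.closure ({sEquiv, tEquiv} : Set ((ℂ × ℂ) ≃ₗ[ℂ] (ℂ × ℂ))),
      g (a, b) = (a', b') := by
  obtain ⟨g, hg, hsnd⟩ := exists_mem_snd_apply_eq h2
  have hQ : quadForm (a, b) = quadForm (g (a', b')) := by
    rw [quadForm_apply_of_mem hg]
    exact h1
  obtain ⟨h, hh, hhg⟩ := exists_mem_apply_eq_of_snd_eq hsnd.symm hQ
  refine ⟨(h * g)⁻¹, inv_mem (mul_mem hh hg), ?_⟩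
  rw [LinearEquiv.coe_inv, LinearEquiv.symm_apply_eq, LinearEquiv.mul_apply, hhg]
end
end

section
/- Let X be an invertible 8×8 complex matrix and for 1 ≤ i < j ≤ 8 set D_{ij} = x_{1i}x_{2j} − x_{1j}x_{2i} (the 2×2 minor formed from the first two rows and columns i, j). Suppose D_{ij} = 0 for all i < j except possibly (i,j) ∈ {(1,2),(3,4),(5,6),(7,8)}. Then there exists exactly one index l ∈ {1,2,3,4} such that the 2×2 block X_{1l} (rows 1,2 and columns 2l−1, 2l) is invertible, and for all other l' ≠ l the block X_{1l'} (rows 1,2 and columns 2l'−1, 2l') is the zero matrix. -/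
/-- The `2×2` block `X_{kl}` of an `8×8` matrix: rows `2k−1, 2k` and columns
`2l−1, 2l` (in 1-indexed terms), i.e. rows `2k, 2k+1` and columns `2l, 2l+1`
with 0-indexing. -/
def blk (X : Matrix (Fin 8) (Fin 8) ℂ) (k l : Fin 4) : Matrix (Fin 2) (Fin 2) ℂ :=
  fun r c => X ⟨2 * k + r, by omega⟩ ⟨2 * l + c, by omega⟩

/-! Let `c_j ∈ ℂ²` be the part of column `j` in the first two rows. As `X` is invertible, these
two rows are linearly independent, so some minor `det (c_j, c_k)` is nonzero; by hypothesis `j, k`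
are then the two columns of one block `X_{1l}`, which is therefore invertible. A column `c` of any
other block has vanishing minors against both columns of `X_{1l}`, which span `ℂ²`, so `c = 0`. -/

namespace Matrix

theorem det_eq_zero_of_two_row_minors_eq_zero {n R : Type*} [Fintype n] [DecidableEq n]
    [CommRing R] [NoZeroDivisors R] (X : Matrix n n R) {i i' : n} (hii' : i ≠ i')
    (h : ∀ j k, X i j * X i' k - X i k * X i' j = 0) : X.det = 0 := by
  by_cases hi : ∀ j, X i j = 0
  · exact det_eq_zero_of_row_eq_zero i hi
  obtain ⟨j, hj⟩ := not_forall.mp hi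
  have hrow : X i j • X i' = X i' j • X i := funext fun k => by
    simp only [Pi.smul_apply, smul_eq_mul]
    linear_combination h j k
  have : X i j * X.det = 0 :=
    calc X i j * X.det = (X.updateRow i' (X i j • X i')).det := by
          rw [det_updateRow_smul, updateRow_eq_self]
      _ = X i' j * (X.updateRow i' (X i)).det := by rw [hrow, det_updateRow_smul]
      _ = 0 := by rw [det_updateRow_eq_zero hii', mul_zero]
  exact (mul_eq_zero.mp this).resolve_left hj

theorem eq_zero_of_cross_minors_eq_zero {R ι : Type*} [CommRing R]
    {A : Matrix (Fin 2) (Fin 2) R} {B : Matrix (Fin 2) ι R} (hA : IsUnit A)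
    (h : ∀ c c', A 0 c * B 1 c' - B 0 c' * A 1 c = 0) : B = 0 := by
  rw [isUnit_iff_isUnit_det, det_fin_two] at hA
  ext r c'
  have h0 : B 0 c' = 0 :=
    hA.mul_right_eq_zero.mp (by linear_combination A 0 1 * h 0 c' - A 0 0 * h 1 c')
  have h1 : B 1 c' = 0 :=
    hA.mul_right_eq_zero.mp (by linear_combination A 1 1 * h 0 c' - A 1 0 * h 1 c')
  fin_cases r
  exacts [h0, h1]

end Matrix

section Blocks

variable {X : Matrix (Fin 8) (Fin 8) ℂ}

theorem blk_zero_apply_zero (l : Fin 4) (c : Fin 2) :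
    blk X 0 l 0 c = X 0 ⟨2 * l + c, by omega⟩ := rfl

theorem blk_zero_apply_one (l : Fin 4) (c : Fin 2) :
    blk X 0 l 1 c = X 1 ⟨2 * l + c, by omega⟩ := rfl

variable (hD : ∀ i j : Fin 8, i < j → ¬((j : ℕ) = (i : ℕ) + 1 ∧ (i : ℕ) % 2 = 0) →
      X 0 i * X 1 j - X 0 j * X 1 i = 0)
include hD

theorem blk_cross_minor_eq_zero {l l' : Fin 4} (hll' : l ≠ l') (c c' : Fin 2) :
    blk X 0 l 0 c * blk X 0 l' 1 c' - blk X 0 l' 0 c' * blk X 0 l 1 c = 0 := by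
  have hl : (l : ℕ) ≠ l' := Fin.val_ne_of_ne hll'
  simp only [blk_zero_apply_zero, blk_zero_apply_one]
  rcases lt_or_gt_of_ne hl with h | h
  · exact hD _ _ (Fin.mk_lt_mk.mpr (by omega)) (by simp only; omega)
  · linear_combination -hD ⟨2 * l' + c', by omega⟩ ⟨2 * l + c, by omega⟩
      (Fin.mk_lt_mk.mpr (by omega)) (by simp only; omega)

theorem exists_isUnit_blk (hX : IsUnit X) : ∃ l : Fin 4, IsUnit (blk X 0 l) := by
  have hdet : X.det ≠ 0 := ((Matrix.isUnit_iff_isUnit_det X).mp hX).ne_zero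
  obtain ⟨j, k, hjk⟩ : ∃ j k, X 0 j * X 1 k - X 0 k * X 1 j ≠ 0 := by
    by_contra! h
    exact hdet (X.det_eq_zero_of_two_row_minors_eq_zero zero_ne_one h)
  wlog hlt : j < k generalizing j k
  · rcases (not_lt.mp hlt).lt_or_eq with h | rfl
    · exact this k j (fun h' => hjk (by linear_combination -h')) h
    · exact absurd (sub_self _) hjk
  obtain ⟨hkj, hj⟩ : (k : ℕ) = j + 1 ∧ (j : ℕ) % 2 = 0 :=
    by_contra fun h => hjk (hD j k hlt h)
  refine ⟨⟨j / 2, by omega⟩, ?_⟩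
  rw [Matrix.isUnit_iff_isUnit_det, Matrix.det_fin_two, isUnit_iff_ne_zero]
  simp only [blk_zero_apply_zero, blk_zero_apply_one]
  convert hjk using 4 <;> ext <;> simp only [Fin.val_zero, Fin.val_one] <;> omega

end Blocks

/-- if `X` is invertible and all `2×2` minors `D_{ij}` from the first two
rows vanish except possibly `D_{12}, D_{34}, D_{56}, D_{78}`, then exactly one of the
blocks `X_{1l}` is invertible and all the other blocks `X_{1l'}` are zero. -/
theorem stmt_16 (X : Matrix (Fin 8) (Fin 8) ℂ) (hX : IsUnit X)
    (hD : ∀ i j : Fin 8, i < j → ¬((j : ℕ) = (i : ℕ) + 1 ∧ (i : ℕ) % 2 = 0) →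
      X 0 i * X 1 j - X 0 j * X 1 i = 0) :
    ∃ l : Fin 4, IsUnit (blk X 0 l) ∧ (∀ l' : Fin 4, l' ≠ l → blk X 0 l' = 0) ∧
      (∀ l' : Fin 4, IsUnit (blk X 0 l') → l' = l) := by
  obtain ⟨l, hl⟩ := exists_isUnit_blk hD hX
  have hzero : ∀ l' : Fin 4, l' ≠ l → blk X 0 l' = 0 := fun l' hl' =>
    Matrix.eq_zero_of_cross_minors_eq_zero hl (blk_cross_minor_eq_zero hD hl'.symm)
  refine ⟨l, hl, hzero, fun l' hl' => ?_⟩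
  by_contra hne
  exact not_isUnit_zero (hzero l' hne ▸ hl')
end
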